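/- Let G be a topological group. For each positive integer n, let t_n denote the number of continuous homomorphisms from G to the symmetric group S_n (with the discrete topology), set t_0 = 1, and let M_n denote the number of open subgroups of G of index n; assume all these sets are finite. Define (b_n)_{n ≥ 0} by b_0 = 1 and b_{n+1} = Σ_{k=0}^{n} C(n, k) · b_{n−k} · (k! · M_{k+1}). Then t_n = b_n for every nonnegative integer n; that is, t_n equals the complete Bell polynomial B_n evaluated at (0!·M_1, 1!·M_2, …, (n−1)!·M_n). -/

import Mathlib

/-- The number of continuous homomorphisms `G → S_n`, where the symmetric group `S_n`
carries the discrete topology. -/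
noncomputable def contHomCount (G : Type*) [Group G] [TopologicalSpace G] (n : ℕ) : ℕ :=
  Nat.card {φ : G →* Equiv.Perm (Fin n) // @Continuous G (Equiv.Perm (Fin n)) _ ⊥ ⇑φ}

/-- The number of open subgroups of `G` of index `n`. -/
noncomputable def openSubgroupCount (G : Type*) [Group G] [TopologicalSpace G] (n : ℕ) : ℕ :=
  Nat.card {H : Subgroup G // IsOpen (H : Set G) ∧ H.index = n}

/-!
A continuous action of `G` on `Option β`, `|β| = n`, splits into its restriction to the orbit
`O` of `none` and its restriction to the complement of `O`. Choosing `O` means choosing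
`k = |O| - 1` points of `β`; the complement carries an arbitrary continuous action, counted by
`t_{n-k}`; and the action on `O` is transitive. A transitive action with base point `a` is the
same as its stabilizer `H`, an open subgroup of index `|O| = k + 1`, together with a bijection
`G ⧸ H ≃ O` sending the trivial coset to `a`, of which there are `k!`. Hence
`t_{n+1} = ∑ C(n,k) t_{n-k} k! M_{k+1}`, which is the recursion defining `b`.
-/

open Equiv

theorem continuous_bot_comp {X Y Z : Type*} [TopologicalSpace X] {f : X → Y}
    (hf : @Continuous X Y _ ⊥ f) (F : Y → Z) : @Continuous X Z _ ⊥ (F ∘ f) :=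
  letI : TopologicalSpace Y := ⊥
  letI : TopologicalSpace Z := ⊥
  haveI : DiscreteTopology Y := ⟨rfl⟩
  continuous_of_discreteTopology.comp hf

theorem continuous_perm_iff_isOpen {X α : Type*} [TopologicalSpace X] [Finite α]
    {f : X → Perm α} : @Continuous X (Perm α) _ ⊥ f ↔ ∀ x y, IsOpen {g | f g x = y} := by
  let _ : TopologicalSpace (Perm α) := ⊥
  have : DiscreteTopology (Perm α) := ⟨rfl⟩
  refine ⟨fun h x y => (isOpen_discrete {σ : Perm α | σ x = y}).preimage h, fun h => ?_⟩
  rw [continuous_discrete_rng]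
  intro σ
  have hσ : f ⁻¹' {σ} = ⋂ x, {g | f g x = σ x} := by
    ext g
    simp [Equiv.ext_iff]
  rw [hσ]
  exact isOpen_iInter_of_finite fun x => h x (σ x)

theorem nat_card_equiv_apply_eq {α β : Type*} [Finite α] (h : Nat.card β = Nat.card α)
    (b : β) (a : α) : Nat.card {e : β ≃ α // e b = a} = (Nat.card α - 1).factorial := by
  classical
  have : Nonempty α := ⟨a⟩
  have : Finite β := Nat.finite_of_card_ne_zero (h ▸ Nat.card_pos.ne')
  have hb : Nat.card {x // x ≠ b} = Nat.card α - 1 := by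
    rw [← h, ← Nat.card_congr (optionSubtypeNe b), Finite.card_option, Nat.add_sub_cancel]
  have ha : Nat.card {y // y ≠ a} = Nat.card α - 1 := by
    rw [← Nat.card_congr (optionSubtypeNe a), Finite.card_option, Nat.add_sub_cancel]
  calc Nat.card {e : β ≃ α // e b = a}
      = Nat.card {e : Option {x // x ≠ b} ≃ α // e none = a} :=
        Nat.card_congr (((optionSubtypeNe b).equivCongr (Equiv.refl α)).symm.subtypeEquiv
          (by simp))
    _ = Nat.card ({x // x ≠ b} ≃ {y // y ≠ a}) := Nat.card_congr (optionSubtype a)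
    _ = (Nat.card α - 1).factorial := by
        have := Fintype.ofFinite β
        have := Fintype.ofFinite α
        rw [Nat.card_eq_fintype_card, Fintype.card_equiv (Fintype.equivOfCardEq (by
          simp only [← Nat.card_eq_fintype_card, ha, hb])), ← Nat.card_eq_fintype_card, hb]

section CountingContinuousActions

variable {G : Type*} [Group G] {α β : Type*}

section QuotientAction

variable (H : Subgroup G) {a : α} (e : G ⧸ H ≃ α)

def permHomOfQuotient : G →* Perm α :=
  e.permCongrHom.toMonoidHom.comp (MulAction.toPermHom G (G ⧸ H))

theorem permHomOfQuotient_apply (g : G) (x : α) :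
    permHomOfQuotient H e g x = e (g • e.symm x) :=
  rfl

variable {H e}

theorem permHomOfQuotient_apply_base (he : e (1 : G) = a) (g : G) :
    permHomOfQuotient H e g a = e g := by
  rw [permHomOfQuotient_apply, ← he, symm_apply_apply, MulAction.Quotient.smul_mk, smul_eq_mul,
    mul_one]

theorem permHomOfQuotient_apply_base_eq_iff (he : e (1 : G) = a) (g : G) :
    permHomOfQuotient H e g a = a ↔ g ∈ H := by
  rw [permHomOfQuotient_apply_base he, ← he, e.apply_eq_iff_eq, QuotientGroup.eq]
  simp

theorem permHomOfQuotient_surjective_apply_base (he : e (1 : G) = a) :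
    Function.Surjective fun g => permHomOfQuotient H e g a := by
  intro x
  obtain ⟨g, hg⟩ := QuotientGroup.mk_surjective (e.symm x)
  exact ⟨g, by simp only [permHomOfQuotient_apply_base he, hg, apply_symm_apply]⟩

theorem permHomOfQuotient_eq {φ : G →* Perm α} (he : ∀ g : G, e g = φ g a) :
    permHomOfQuotient H e = φ := by
  ext g x
  obtain ⟨h, hh⟩ := QuotientGroup.mk_surjective (e.symm x)
  rw [permHomOfQuotient_apply, ← hh, MulAction.Quotient.smul_mk, smul_eq_mul, he, map_mul,
    Perm.mul_apply, ← he h, hh, apply_symm_apply]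

theorem continuous_permHomOfQuotient [TopologicalSpace G] [IsTopologicalGroup G] [Finite α]
    (hH : IsOpen (H : Set G)) : @Continuous G (Perm α) _ ⊥ ⇑(permHomOfQuotient H e) := by
  refine continuous_perm_iff_isOpen.2 fun x y => ?_
  obtain ⟨a, ha⟩ := QuotientGroup.mk_surjective (e.symm x)
  obtain ⟨b, hb⟩ := QuotientGroup.mk_surjective (e.symm y)
  have hset : {g | permHomOfQuotient H e g x = y} = (fun g => (g * a)⁻¹ * b) ⁻¹' H := by
    ext g
    rw [Set.mem_ofPred_eq, permHomOfQuotient_apply, ← ha, MulAction.Quotient.smul_mk,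
      ← Equiv.eq_symm_apply, ← hb, QuotientGroup.eq]
    rfl
  rw [hset]
  exact hH.preimage (by fun_prop)

end QuotientAction

section Orbit

variable [Fintype α]

noncomputable def orbitFinset (φ : G →* Perm α) (a : α) : Finset α := by
  classical exact Finset.univ.filter fun x => ∃ g, φ g a = x

variable {φ : G →* Perm α} {a : α}

theorem mem_orbitFinset {x : α} : x ∈ orbitFinset φ a ↔ ∃ g, φ g a = x := by
  simp [orbitFinset]

theorem self_mem_orbitFinset : a ∈ orbitFinset φ a :=
  mem_orbitFinset.2 ⟨1, by simp⟩

theorem apply_mem_orbitFinset_iff (g : G) (x : α) :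
    φ g x ∈ orbitFinset φ a ↔ x ∈ orbitFinset φ a := by
  simp only [mem_orbitFinset]
  constructor
  · rintro ⟨h, hh⟩
    exact ⟨g⁻¹ * h, by simp [hh]⟩
  · rintro ⟨h, rfl⟩
    exact ⟨g * h, by rw [map_mul, Perm.mul_apply]⟩

theorem apply_mem_iff_of_orbitFinset_eq {O : Finset α} (hO : orbitFinset φ a = O) (g : G)
    (x : α) : φ g x ∈ O ↔ x ∈ O :=
  hO ▸ apply_mem_orbitFinset_iff g x

end Orbit

section SubtypePerm

variable {p : α → Prop}

def subtypePermHom (φ : G →* Perm α) (h : ∀ g x, p (φ g x) ↔ p x) :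
    G →* Perm {x // p x} where
  toFun g := (φ g).subtypePerm (h g)
  map_one' := by ext; simp
  map_mul' g g' := by
    ext x
    exact congrArg (· x) (map_mul φ g g')

@[simp]
theorem subtypePermHom_apply (φ : G →* Perm α) (h : ∀ g x, p (φ g x) ↔ p x) (g : G)
    (x : {x // p x}) : (subtypePermHom φ h g x : α) = φ g x :=
  rfl

variable [DecidablePred p] (ψ₁ : G →* Perm {x // p x}) (ψ₂ : G →* Perm {x // ¬p x})

def subtypeCongrPermHom : G →* Perm α :=
  (Perm.subtypeCongrHom p).comp (ψ₁.prod ψ₂)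

theorem subtypeCongrPermHom_apply_of_pos (g : G) {x : α} (hx : p x) :
    subtypeCongrPermHom ψ₁ ψ₂ g x = ψ₁ g ⟨x, hx⟩ :=
  Perm.subtypeCongr.left_apply _ _ hx

theorem subtypeCongrPermHom_apply_of_neg (g : G) {x : α} (hx : ¬p x) :
    subtypeCongrPermHom ψ₁ ψ₂ g x = ψ₂ g ⟨x, hx⟩ :=
  Perm.subtypeCongr.right_apply _ _ hx

theorem orbitFinset_subtypeCongrPermHom [Fintype α] [DecidableEq α] {a : α} {O : Finset α}
    (ha : a ∈ O) {ψ₁ : G →* Perm O} (ψ₂ : G →* Perm {x // x ∉ O})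
    (h₁ : ∀ y, ∃ g, ψ₁ g ⟨a, ha⟩ = y) : orbitFinset (subtypeCongrPermHom ψ₁ ψ₂) a = O := by
  ext x
  simp only [mem_orbitFinset, subtypeCongrPermHom_apply_of_pos _ _ _ ha]
  refine ⟨fun ⟨g, hg⟩ => hg ▸ (ψ₁ g _).2, fun hx => ?_⟩
  obtain ⟨g, hg⟩ := h₁ ⟨x, hx⟩
  exact ⟨g, by rw [hg]⟩

end SubtypePerm

variable [TopologicalSpace G]

abbrev ContPermHom (G α : Type*) [Group G] [TopologicalSpace G] : Type _ :=
  {φ : G →* Perm α // @Continuous G (Perm α) _ ⊥ ⇑φ}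

def ContPermHom.congr (e : α ≃ β) : ContPermHom G α ≃ ContPermHom G β where
  toFun φ := ⟨e.permCongrHom.toMonoidHom.comp φ.1, continuous_bot_comp φ.2 e.permCongr⟩
  invFun ψ := ⟨e.symm.permCongrHom.toMonoidHom.comp ψ.1, continuous_bot_comp ψ.2 e.symm.permCongr⟩
  left_inv φ := by ext; simp
  right_inv ψ := by ext; simp

theorem nat_card_contPermHom [Finite α] :
    Nat.card (ContPermHom G α) = contHomCount G (Nat.card α) :=
  Nat.card_congr (ContPermHom.congr (Finite.equivFin α))

theorem finite_contPermHom (hT : ∀ n, Finite (ContPermHom G (Fin n))) [Finite α] :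
    Finite (ContPermHom G α) :=
  Finite.of_equiv _ (ContPermHom.congr (Finite.equivFin α).symm)

theorem contHomCount_zero : contHomCount G 0 = 1 := by
  rw [contHomCount, Nat.card_eq_one_iff_unique]
  refine ⟨⟨fun φ ψ => Subtype.ext (MonoidHom.ext fun g => Subsingleton.elim _ _)⟩, ⟨1, ?_⟩⟩
  exact @continuous_const G (Perm (Fin 0)) _ ⊥ 1

theorem continuous_subtypePermHom {p : α → Prop} [Finite α] {φ : G →* Perm α}
    (hφ : @Continuous G _ _ ⊥ ⇑φ) (h : ∀ g x, p (φ g x) ↔ p x) :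
    @Continuous G _ _ ⊥ ⇑(subtypePermHom φ h) := by
  rw [continuous_perm_iff_isOpen] at hφ ⊢
  intro x y
  simpa [Subtype.ext_iff] using hφ x y

theorem continuous_subtypeCongrPermHom {p : α → Prop} [DecidablePred p]
    {ψ₁ : G →* Perm {x // p x}} {ψ₂ : G →* Perm {x // ¬p x}} (h₁ : @Continuous G _ _ ⊥ ⇑ψ₁)
    (h₂ : @Continuous G _ _ ⊥ ⇑ψ₂) : @Continuous G _ _ ⊥ ⇑(subtypeCongrPermHom ψ₁ ψ₂) := by
  let _ : TopologicalSpace (Perm {x // p x}) := ⊥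
  let _ : TopologicalSpace (Perm {x // ¬p x}) := ⊥
  let _ : TopologicalSpace (Perm α) := ⊥
  have : DiscreteTopology (Perm {x // p x}) := ⟨rfl⟩
  have : DiscreteTopology (Perm {x // ¬p x}) := ⟨rfl⟩
  exact (continuous_of_discreteTopology (f := ⇑(Perm.subtypeCongrHom p))).comp (h₁.prodMk h₂)

abbrev TransContPermHom (G α : Type*) [Group G] [TopologicalSpace G] (a : α) : Type _ :=
  {φ : ContPermHom G α // ∀ x, ∃ g, φ.1 g a = x}

noncomputable def transContPermHomEquiv [IsTopologicalGroup G] [Finite α] (a : α) :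
    (Σ H : {H : Subgroup G // IsOpen (H : Set G) ∧ H.index = Nat.card α},
      {e : G ⧸ H.1 ≃ α // e (1 : G) = a}) ≃ TransContPermHom G α a := by
  refine Equiv.ofBijective (fun ⟨H, e⟩ => ⟨⟨permHomOfQuotient H.1 e.1,
    continuous_permHomOfQuotient H.2.1⟩, permHomOfQuotient_surjective_apply_base e.2⟩) ⟨?_, ?_⟩
  · rintro ⟨⟨H, hH⟩, e, he⟩ ⟨⟨H', hH'⟩, e', he'⟩ h
    have h : permHomOfQuotient H e = permHomOfQuotient H' e' := congrArg (·.1.1) h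
    obtain rfl : H = H' := by
      ext g
      rw [← permHomOfQuotient_apply_base_eq_iff he, ← permHomOfQuotient_apply_base_eq_iff he', h]
    obtain rfl : e = e' := by
      ext q
      obtain ⟨g, rfl⟩ := QuotientGroup.mk_surjective q
      rw [← permHomOfQuotient_apply_base he, ← permHomOfQuotient_apply_base he', h]
    rfl
  · rintro ⟨⟨φ, hφ⟩, htrans⟩
    let _ : MulAction G α := MulAction.compHom α φ
    let H := MulAction.stabilizer G a
    have hopen : IsOpen (H : Set G) := continuous_perm_iff_isOpen.1 hφ a a
    let e : G ⧸ H ≃ α := (MulAction.orbitEquivQuotientStabilizer G a).symm.trans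
      (Equiv.subtypeUnivEquiv htrans)
    have he : ∀ g : G, e g = φ g a := fun g => rfl
    refine ⟨⟨⟨H, hopen, Nat.card_congr e⟩, e, (he 1).trans (by simp)⟩, ?_⟩
    exact Subtype.ext (Subtype.ext (permHomOfQuotient_eq he))

theorem nat_card_transContPermHom [IsTopologicalGroup G] [Finite α] [Finite (ContPermHom G α)]
    (a : α) : Nat.card (TransContPermHom G α a) =
      (Nat.card α - 1).factorial * openSubgroupCount G (Nat.card α) := by
  let F (H : {H : Subgroup G // IsOpen (H : Set G) ∧ H.index = Nat.card α}) : Type _ :=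
    {e : G ⧸ H.1 ≃ α // e (1 : G) = a}
  let E : (Σ H, F H) ≃ TransContPermHom G α a := transContPermHomEquiv a
  have hfiber (H) : Nat.card (F H) = (Nat.card α - 1).factorial :=
    nat_card_equiv_apply_eq H.2.2 _ a
  have : Finite (Σ H, F H) := Finite.of_equiv _ E.symm
  have hF (H) : Finite (F H) := Finite.of_injective _ (sigma_mk_injective (β := F) (i := H))
  -- every fibre has `(|α| - 1)! > 0` elements, so only finitely many subgroups occur
  have : Finite {H : Subgroup G // IsOpen (H : Set G) ∧ H.index = Nat.card α} :=
    Finite.of_surjective Sigma.fst fun H =>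
      have := (Nat.card_pos_iff.1 (by rw [hfiber H]; exact Nat.factorial_pos _)).1
      ⟨⟨H, Classical.arbitrary (F H)⟩, rfl⟩
  have := Fintype.ofFinite {H : Subgroup G // IsOpen (H : Set G) ∧ H.index = Nat.card α}
  rw [← Nat.card_congr E, Nat.card_sigma, Finset.sum_congr rfl fun H _ => hfiber H,
    Finset.sum_const, Finset.card_univ, smul_eq_mul, ← Nat.card_eq_fintype_card, mul_comm]
  rfl

noncomputable def orbitFiberEquiv [Fintype α] [DecidableEq α] {a : α} {O : Finset α}
    (ha : a ∈ O) : {φ : ContPermHom G α // orbitFinset φ.1 a = O} ≃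
      TransContPermHom G O ⟨a, ha⟩ × ContPermHom G {x // x ∉ O} where
  toFun φ :=
    have h := apply_mem_iff_of_orbitFinset_eq φ.2
    (⟨⟨subtypePermHom φ.1.1 h, continuous_subtypePermHom φ.1.2 h⟩, fun y => by
        obtain ⟨g, hg⟩ := mem_orbitFinset.1 (by rw [φ.2]; exact y.2)
        exact ⟨g, Subtype.ext hg⟩⟩,
      ⟨subtypePermHom φ.1.1 fun g x => not_congr (h g x), continuous_subtypePermHom φ.1.2 _⟩)
  invFun ψ := ⟨⟨subtypeCongrPermHom ψ.1.1.1 ψ.2.1,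
    continuous_subtypeCongrPermHom ψ.1.1.2 ψ.2.2⟩, orbitFinset_subtypeCongrPermHom ha _ ψ.1.2⟩
  left_inv φ := by
    ext g x
    by_cases hx : x ∈ O
    · simp [subtypeCongrPermHom_apply_of_pos _ _ _ hx]
    · simp [subtypeCongrPermHom_apply_of_neg _ _ _ hx]
  right_inv ψ := by
    ext g x
    · simp [subtypeCongrPermHom_apply_of_pos _ _ _ x.2]
    · simp [subtypeCongrPermHom_apply_of_neg _ _ _ x.2]

theorem nat_card_contPermHom_option [IsTopologicalGroup G] [Fintype β]
    (hT : ∀ n, Finite (ContPermHom G (Fin n))) :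
    Nat.card (ContPermHom G (Option β)) = ∑ k ∈ Finset.range (Fintype.card β + 1),
      (Fintype.card β).choose k * contHomCount G (Fintype.card β - k) *
        (k.factorial * openSubgroupCount G (k + 1)) := by
  classical
  have := finite_contPermHom (α := Option β) hT
  have hfiber (S : Finset β) :
      Nat.card {φ : ContPermHom G (Option β) // (orbitFinset φ.1 none).eraseNone = S} =
        contHomCount G (Fintype.card β - S.card) *
          (S.card.factorial * openSubgroupCount G (S.card + 1)) := by
    have hiff (φ : ContPermHom G (Option β)) :
        (orbitFinset φ.1 none).eraseNone = S ↔ orbitFinset φ.1 none = S.insertNone := by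
      refine ⟨fun h => ?_, fun h => by rw [h, Finset.eraseNone_insertNone]⟩
      rw [← h, Finset.insertNone_eraseNone, Finset.insert_eq_of_mem self_mem_orbitFinset]
    have := finite_contPermHom (α := S.insertNone) hT
    have hcompl : Nat.card {x // x ∉ S.insertNone} = Fintype.card β - S.card := by
      rw [Nat.card_eq_fintype_card, Fintype.card_subtype_compl, Fintype.card_option,
        Fintype.card_coe, Finset.card_insertNone, Nat.add_sub_add_right]
    rw [Nat.card_congr ((Equiv.subtypeEquivRight hiff).trans
        (orbitFiberEquiv Finset.none_mem_insertNone)), Nat.card_prod,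
      nat_card_transContPermHom, nat_card_contPermHom, hcompl, Nat.card_eq_fintype_card,
      Fintype.card_coe, Finset.card_insertNone, Nat.add_sub_cancel, mul_comm]
  calc Nat.card (ContPermHom G (Option β))
      = Nat.card (Σ S : Finset β,
          {φ : ContPermHom G (Option β) // (orbitFinset φ.1 none).eraseNone = S}) :=
        Nat.card_congr (Equiv.sigmaFiberEquiv _).symm
    _ = ∑ S ∈ (Finset.univ : Finset β).powerset, contHomCount G (Fintype.card β - S.card) *
          (S.card.factorial * openSubgroupCount G (S.card + 1)) := by
        rw [Nat.card_sigma, Finset.powerset_univ]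
        exact Finset.sum_congr rfl fun S _ => hfiber S
    _ = _ := by
        rw [Finset.sum_powerset_apply_card fun k => contHomCount G (Fintype.card β - k) *
          (k.factorial * openSubgroupCount G (k + 1)), Finset.card_univ]
        simp only [smul_eq_mul, mul_assoc]

theorem contHomCount_succ [IsTopologicalGroup G] (hT : ∀ n, Finite (ContPermHom G (Fin n)))
    (n : ℕ) : contHomCount G (n + 1) = ∑ k ∈ Finset.range (n + 1),
      n.choose k * contHomCount G (n - k) * (k.factorial * openSubgroupCount G (k + 1)) := by
  have h := nat_card_contPermHom_option (β := Fin n) hT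
  rwa [nat_card_contPermHom, Finite.card_option, Nat.card_eq_fintype_card, Fintype.card_fin] at h

end CountingContinuousActions

theorem contHomCount_eq_bell_general (G : Type*) [Group G] [TopologicalSpace G]
    [IsTopologicalGroup G]
    (hfin_t : ∀ n : ℕ,
      Finite {φ : G →* Equiv.Perm (Fin n) // @Continuous G (Equiv.Perm (Fin n)) _ ⊥ ⇑φ})
    (b : ℕ → ℕ) (hb0 : b 0 = 1)
    (hb : ∀ n : ℕ, b (n + 1) =
      ∑ k ∈ Finset.range (n + 1),
        n.choose k * b (n - k) * (k.factorial * openSubgroupCount G (k + 1))) :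
    ∀ n : ℕ, contHomCount G n = b n := by
  intro n
  induction n using Nat.strong_induction_on with
  | _ n ih =>
    cases n with
    | zero => rw [hb0, contHomCount_zero]
    | succ n =>
      rw [hb, contHomCount_succ hfin_t]
      exact Finset.sum_congr rfl fun k _ => by rw [ih (n - k) (by omega)]

/-- With `b_0 = 1` and
`b_{n+1} = ∑_{k=0}^{n} C(n,k) · b_{n-k} · (k! · M_{k+1})` (i.e. `b_n` is the complete
Bell polynomial `B_n(0!·M_1, …, (n-1)!·M_n)`), one has `t_n = b_n` for all `n ≥ 0`,
where `t_n` is the number of continuous homomorphisms `G → S_n` (with `t_0 = 1`) and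
`M_k` the number of open subgroups of `G` of index `k`. -/
theorem contHomCount_eq_bell (G : Type*) [Group G] [TopologicalSpace G]
    [IsTopologicalGroup G]
    (hfin_t : ∀ n : ℕ,
      Finite {φ : G →* Equiv.Perm (Fin n) // @Continuous G (Equiv.Perm (Fin n)) _ ⊥ ⇑φ})
    (hfin_M : ∀ n : ℕ, 0 < n → Finite {H : Subgroup G // IsOpen (H : Set G) ∧ H.index = n})
    (b : ℕ → ℕ) (hb0 : b 0 = 1)
    (hb : ∀ n : ℕ, b (n + 1) =
      ∑ k ∈ Finset.range (n + 1),
        n.choose k * b (n - k) * (k.factorial * openSubgroupCount G (k + 1))) :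
    ∀ n : ℕ, contHomCount G n = b n :=
  contHomCount_eq_bell_general G hfin_t b hb0 hb
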